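/- arXiv:0806.1782 — 4 statements merged into one kernel-verified Lean document; each statement's English description precedes it below -/
import Mathlib

section
/- Let k > 1/2 and φ smooth with c ≤ φ(ξ)/ξ ≤ C on (0,1]. If g ∈ L²(0,1) is smooth on (0,1], g(1) = 0, and V*(g)(ξ) = −φ(ξ)^{2k} ξ^{-k} ∂_ξ(ξ^{-k} g(ξ)) lies in L²(0,1), then g/ξ ∈ L²(0,1) and ∫₀¹ |g/ξ|² dξ ≤ (2/(2k−1))² ‖ξ/φ‖_{L^∞}^{4k} ∫₀¹ |V*(g)|² dξ. -/
open MeasureTheory Set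

/-- The adjoint modified derivative operator `V*(g)(ξ) = -φ^{2k} ξ^{-k} ∂_ξ(ξ^{-k} g)`. -/
noncomputable def Vstar (k : ℝ) (φ g : ℝ → ℝ) (ξ : ℝ) : ℝ :=
  -(φ ξ ^ (2 * k)) * ξ ^ (-k) * deriv (fun x => x ^ (-k) * g x) ξ

lemma young_aux (σ κ a b : ℝ) (hκ : 0 < κ) :
    2 * σ * a * b ≤ 2 * σ ^ 2 / κ * a ^ 2 + κ / 2 * b ^ 2 := by
  have h : 2 * σ ^ 2 / κ * a ^ 2 = 2 * σ ^ 2 * a ^ 2 / κ := by ring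
  rw [h, ← sub_le_iff_le_add, le_div_iff₀ hκ]
  nlinarith [sq_nonneg (2 * σ * a - κ * b)]

lemma hasDerivAt_F (k : ℝ) (φ g : ℝ → ℝ) {ξ g' : ℝ} (hξ : ξ ∈ Ioo (0:ℝ) 1)
    (hφξ : 0 < φ ξ) (hgd : HasDerivAt g g' ξ) :
    HasDerivAt (fun x => g x ^ 2 / x)
      ((2 * k - 1) * (g ξ / ξ) ^ 2 - 2 * ((ξ / φ ξ) ^ (2 * k)) * Vstar k φ g ξ * (g ξ / ξ)) ξ := by
  have hξ0 : (0:ℝ) < ξ := hξ.1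
  have hrpow : HasDerivAt (fun x : ℝ => x ^ (-k)) (-k * ξ ^ (-k - 1)) ξ := by
    simpa using Real.hasDerivAt_rpow_const (p := -k) (Or.inl hξ0.ne')
  have hh : HasDerivAt (fun x => x ^ (-k) * g x)
      (-k * ξ ^ (-k - 1) * g ξ + ξ ^ (-k) * g') ξ := hrpow.mul hgd
  have hV : Vstar k φ g ξ
      = -(φ ξ ^ (2 * k)) * ξ ^ (-k) * (-k * ξ ^ (-k - 1) * g ξ + ξ ^ (-k) * g') := by
    rw [Vstar, hh.deriv]
  have hF : HasDerivAt (fun x => g x ^ 2 / x) _ ξ := (hgd.pow 2).div (hasDerivAt_id ξ) hξ0.ne'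
  convert hF using 1
  have hQ : (0:ℝ) < φ ξ ^ (2 * k) := Real.rpow_pos_of_pos hφξ _
  have hP : (0:ℝ) < ξ ^ k := Real.rpow_pos_of_pos hξ0 _
  have hdiv : (ξ / φ ξ) ^ (2 * k) = ξ ^ (2 * k) / φ ξ ^ (2 * k) :=
    Real.div_rpow hξ0.le hφξ.le _
  have h2k : ξ ^ (2 * k) = (ξ ^ k) ^ 2 := by
    rw [show (2:ℝ) * k = k * 2 by ring, Real.rpow_mul hξ0.le, Real.rpow_two]
  have hnk : ξ ^ (-k) = (ξ ^ k)⁻¹ := Real.rpow_neg hξ0.le k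
  have hnk1 : ξ ^ (-k - 1) = (ξ ^ k)⁻¹ * ξ⁻¹ := by
    rw [show -k - 1 = -k + (-1) by ring, Real.rpow_add hξ0, Real.rpow_neg_one,
      Real.rpow_neg hξ0.le]
  rw [hV, hdiv, h2k, hnk, hnk1, Pi.pow_apply]
  field_simp
  ring

/-- weighted coercivity estimate for `V*`:
`∫₀¹ |g/ξ|² ≤ (2/(2k−1))² ‖ξ/φ‖_∞^{4k} ∫₀¹ |V*(g)|²` for `g` with `g(1) = 0`. -/
theorem hardy_for_Vstar (k : ℝ) (hk : 1 / 2 < k) (φ g : ℝ → ℝ) (c C S : ℝ)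
    (hc : 0 < c) (hcC : c ≤ C)
    (hφ : ContDiff ℝ (⊤ : ℕ∞) φ)
    (hb : ∀ ξ ∈ Ioc (0:ℝ) 1, c ≤ φ ξ / ξ ∧ φ ξ / ξ ≤ C)
    (hS : ∀ ξ ∈ Ioc (0:ℝ) 1, ξ / φ ξ ≤ S)
    (hg : IntegrableOn (fun ξ => (g ξ) ^ 2) (Ioo (0:ℝ) 1))
    (hgsmooth : ContDiffOn ℝ (⊤ : ℕ∞) g (Ioc (0:ℝ) 1))
    (hg1 : g 1 = 0)
    (hVg : IntegrableOn (fun ξ => (Vstar k φ g ξ) ^ 2) (Ioo (0:ℝ) 1)) :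
    IntegrableOn (fun ξ => (g ξ / ξ) ^ 2) (Ioo (0:ℝ) 1) ∧
      ∫ ξ in Ioo (0:ℝ) 1, (g ξ / ξ) ^ 2 ≤
        (2 / (2 * k - 1)) ^ 2 * S ^ (4 * k) * ∫ ξ in Ioo (0:ℝ) 1, (Vstar k φ g ξ) ^ 2 := by
  have hκ : (0:ℝ) < 2 * k - 1 := by linarith
  -- positivity of φ on (0,1]
  have hφpos : ∀ ξ ∈ Ioc (0:ℝ) 1, 0 < φ ξ := by
    intro ξ hξ
    have h1 := (hb ξ hξ).1
    have h2 : (0:ℝ) < ξ := hξ.1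
    have h3 : c * ξ ≤ (φ ξ / ξ) * ξ := mul_le_mul_of_nonneg_right h1 h2.le
    rw [div_mul_cancel₀ _ h2.ne'] at h3
    exact lt_of_lt_of_le (by positivity) h3
  have h1mem : (1:ℝ) ∈ Ioc (0:ℝ) 1 := ⟨one_pos, le_refl _⟩
  have hS0 : (0:ℝ) < S := by
    have := hS 1 h1mem
    have hφ1 := hφpos 1 h1mem
    have : 1 / φ 1 ≤ S := by simpa using this
    exact lt_of_lt_of_le (by positivity) this
  set σ : ℝ := S ^ (2 * k) with hσdef
  have hσ0 : (0:ℝ) < σ := Real.rpow_pos_of_pos hS0 _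
  have hS4 : S ^ (4 * k) = σ ^ 2 := by
    rw [hσdef, show (4:ℝ) * k = 2 * k * 2 by ring, Real.rpow_mul hS0.le, Real.rpow_two]
  set A : ℝ := ∫ ξ in Ioo (0:ℝ) 1, (Vstar k φ g ξ) ^ 2 with hAdef
  have hA0 : 0 ≤ A := setIntegral_nonneg measurableSet_Ioo fun x _ => sq_nonneg _
  -- continuity of u = g/ξ on (0,1]
  have hgc : ContinuousOn g (Ioc (0:ℝ) 1) := hgsmooth.continuousOn
  have hu_cont : ContinuousOn (fun ξ => g ξ / ξ) (Ioc (0:ℝ) 1) :=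
    hgc.div continuousOn_id fun ξ hξ => hξ.1.ne'
  -- measurability of Vstar
  have hφcont : Continuous φ := hφ.continuous
  have hVmeas : Measurable (Vstar k φ g) := by
    unfold Vstar
    have h1 : Measurable fun ξ : ℝ => -(φ ξ ^ (2 * k)) * ξ ^ (-k) := by fun_prop
    exact h1.mul (measurable_deriv _)
  have hcmeas : Measurable (fun x : ℝ => (x / φ x) ^ (2 * k)) := by fun_prop
  -- differentiability of g at interior points
  have hgd : ∀ ξ ∈ Ioo (0:ℝ) 1, HasDerivAt g (deriv g ξ) ξ := by
    intro ξ hξ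
    have hmem : Ioc (0:ℝ) 1 ∈ nhds ξ := Ioc_mem_nhds hξ.1 hξ.2
    exact ((hgsmooth.differentiableOn (by simp) ξ (Ioo_subset_Ioc_self hξ)).differentiableAt
      hmem).hasDerivAt
  -- pointwise bounds for the weight
  have hcb : ∀ ξ ∈ Ioc (0:ℝ) 1, 0 ≤ (ξ / φ ξ) ^ (2 * k) ∧ (ξ / φ ξ) ^ (2 * k) ≤ σ := by
    intro ξ hξ
    have h0 : 0 ≤ ξ / φ ξ := div_nonneg hξ.1.le (hφpos ξ hξ).le
    exact ⟨Real.rpow_nonneg h0 _, Real.rpow_le_rpow h0 (hS ξ hξ) (by linarith)⟩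
  -- the key estimate on (ε, 1]
  have key : ∀ ε ∈ Ioo (0:ℝ) 1,
      ∫ x in Ioc ε 1, (g x / x) ^ 2 ≤ (2 / (2 * k - 1)) ^ 2 * S ^ (4 * k) * A := by
    intro ε hε
    have hsub : Icc ε 1 ⊆ Ioc (0:ℝ) 1 := fun x hx => ⟨lt_of_lt_of_le hε.1 hx.1, hx.2⟩
    have hsubo : Ioc ε 1 ⊆ Ioc (0:ℝ) 1 := fun x hx => ⟨hε.1.trans hx.1, hx.2⟩
    -- integrability of u² on (ε,1]
    have hIu : IntegrableOn (fun x => (g x / x) ^ 2) (Ioc ε 1) :=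
      (((hu_cont.mono hsub).pow 2).integrableOn_Icc).mono_set Ioc_subset_Icc_self
    -- integrability of V² on (ε,1]
    have hIV : IntegrableOn (fun x => (Vstar k φ g x) ^ 2) (Ioc ε 1) := by
      rw [integrableOn_Ioc_iff_integrableOn_Ioo]
      exact hVg.mono_set fun x hx => ⟨hε.1.trans hx.1, hx.2⟩
    -- integrability of the cross term
    have hcross : IntegrableOn
        (fun x => 2 * ((x / φ x) ^ (2 * k)) * Vstar k φ g x * (g x / x)) (Ioc ε 1) := by
      have hdom : IntegrableOn
          (fun x => σ * ((Vstar k φ g x) ^ 2 + (g x / x) ^ 2)) (Ioc ε 1) :=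
        (hIV.add hIu).const_mul σ
      apply Integrable.mono' hdom
      · exact (((measurable_const.mul hcmeas).mul hVmeas).aestronglyMeasurable).mul
          ((hu_cont.mono hsubo).aestronglyMeasurable measurableSet_Ioc)
      · filter_upwards [ae_restrict_mem measurableSet_Ioc] with x hx
        obtain ⟨hc0, hcσ⟩ := hcb x (hsubo hx)
        set V := Vstar k φ g x
        set u := g x / x
        rw [Real.norm_eq_abs, abs_mul, abs_mul, abs_mul, abs_two, abs_of_nonneg hc0]
        nlinarith [mul_nonneg (sub_nonneg.2 hcσ) (mul_nonneg (abs_nonneg V) (abs_nonneg u)),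
          mul_nonneg hσ0.le (sq_nonneg (|V| - |u|)), sq_abs V, sq_abs u]
    -- integrability of D
    have hID : IntegrableOn (fun x => (2 * k - 1) * (g x / x) ^ 2
        - 2 * ((x / φ x) ^ (2 * k)) * Vstar k φ g x * (g x / x)) (Ioc ε 1) :=
      (hIu.const_mul _).sub hcross
    -- FTC
    have hFTC : ∫ x in ε..1, ((2 * k - 1) * (g x / x) ^ 2
        - 2 * ((x / φ x) ^ (2 * k)) * Vstar k φ g x * (g x / x))
        = g 1 ^ 2 / 1 - g ε ^ 2 / ε := by
      refine intervalIntegral.integral_eq_sub_of_hasDeriv_right_of_le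
        (f := fun x => g x ^ 2 / x) hε.2.le ?_ ?_ ?_
      · exact ((hgc.mono hsub).pow 2).div (continuousOn_id.mono hsub)
          fun x hx => (hsub hx).1.ne'
      · intro x hx
        have hx' : x ∈ Ioo (0:ℝ) 1 := ⟨hε.1.trans hx.1, hx.2⟩
        exact (hasDerivAt_F k φ g hx' (hφpos x (Ioo_subset_Ioc_self hx'))
          (hgd x hx')).hasDerivWithinAt
      · exact (intervalIntegrable_iff_integrableOn_Ioc_of_le hε.2.le).2 hID
    have hDneg : ∫ x in Ioc ε 1, ((2 * k - 1) * (g x / x) ^ 2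
        - 2 * ((x / φ x) ^ (2 * k)) * Vstar k φ g x * (g x / x)) ≤ 0 := by
      rw [← intervalIntegral.integral_of_le hε.2.le, hFTC, hg1]
      have : 0 ≤ g ε ^ 2 / ε := div_nonneg (sq_nonneg _) hε.1.le
      simp only [zero_pow, ne_eq, OfNat.ofNat_ne_zero, not_false_eq_true, zero_div]
      linarith
    have hsplit : ∫ x in Ioc ε 1, ((2 * k - 1) * (g x / x) ^ 2
          - 2 * ((x / φ x) ^ (2 * k)) * Vstar k φ g x * (g x / x))
        = (2 * k - 1) * (∫ x in Ioc ε 1, (g x / x) ^ 2)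
          - ∫ x in Ioc ε 1, 2 * ((x / φ x) ^ (2 * k)) * Vstar k φ g x * (g x / x) := by
      rw [integral_sub (hIu.const_mul _) hcross, integral_const_mul]
    set Iε : ℝ := ∫ x in Ioc ε 1, (g x / x) ^ 2 with hIεdef
    set Aε : ℝ := ∫ x in Ioc ε 1, (Vstar k φ g x) ^ 2 with hAεdef
    have h6 : (2 * k - 1) * Iε
        ≤ ∫ x in Ioc ε 1, 2 * ((x / φ x) ^ (2 * k)) * Vstar k φ g x * (g x / x) := by
      rw [hsplit] at hDneg; linarith
    -- pointwise Young bound and integral comparison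
    have h7 : ∫ x in Ioc ε 1, 2 * ((x / φ x) ^ (2 * k)) * Vstar k φ g x * (g x / x)
        ≤ ∫ x in Ioc ε 1,
            (2 * σ ^ 2 / (2 * k - 1) * (Vstar k φ g x) ^ 2
              + (2 * k - 1) / 2 * (g x / x) ^ 2) := by
      have hRint : IntegrableOn (fun x => 2 * σ ^ 2 / (2 * k - 1) * (Vstar k φ g x) ^ 2
          + (2 * k - 1) / 2 * (g x / x) ^ 2) (Ioc ε 1) :=
        (hIV.const_mul _).add (hIu.const_mul _)
      apply setIntegral_mono_on hcross hRint measurableSet_Ioc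
      intro x hx
      obtain ⟨hc0, hcσ⟩ := hcb x (hsubo hx)
      set V := Vstar k φ g x
      set u := g x / x
      have habs : V * u ≤ |V| * |u| := (le_abs_self _).trans_eq (abs_mul V u)
      have hy := young_aux σ (2 * k - 1) |V| |u| hκ
      rw [sq_abs, sq_abs] at hy
      have e1 : 2 * ((x / φ x) ^ (2 * k)) * V * u ≤ 2 * σ * |V| * |u| := by
        nlinarith [mul_nonneg hc0 (sub_nonneg.2 habs),
          mul_nonneg (sub_nonneg.2 hcσ) (mul_nonneg (abs_nonneg V) (abs_nonneg u))]
      linarith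
    have h8 : ∫ x in Ioc ε 1,
          (2 * σ ^ 2 / (2 * k - 1) * (Vstar k φ g x) ^ 2
            + (2 * k - 1) / 2 * (g x / x) ^ 2)
        = 2 * σ ^ 2 / (2 * k - 1) * Aε + (2 * k - 1) / 2 * Iε := by
      rw [integral_add (hIV.const_mul _) (hIu.const_mul _), integral_const_mul,
        integral_const_mul]
    have hAεA : Aε ≤ A := by
      rw [hAεdef, integral_Ioc_eq_integral_Ioo]
      apply setIntegral_mono_set hVg
      · exact Filter.Eventually.of_forall fun x => sq_nonneg _
      · exact HasSubset.Subset.eventuallyLE fun x hx => ⟨hε.1.trans hx.1, hx.2⟩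
    -- combine
    have hcomb : (2 * k - 1) / 2 * Iε ≤ 2 * σ ^ 2 / (2 * k - 1) * A := by
      have hB1 : 0 ≤ 2 * σ ^ 2 / (2 * k - 1) := by positivity
      have h9 := h7.trans_eq h8
      have h10 := mul_le_mul_of_nonneg_left hAεA hB1
      linarith
    have hc2 : (2 * k - 1) * ((2 * k - 1) / 2 * Iε) ≤ 2 * σ ^ 2 * A := by
      have := mul_le_mul_of_nonneg_left hcomb hκ.le
      have hR : (2 * k - 1) * (2 * σ ^ 2 / (2 * k - 1) * A) = 2 * σ ^ 2 * A := by
        field_simp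
      linarith [hR ▸ this]
    clear_value Iε Aε A σ
    rw [hS4]
    have hrw : (2 / (2 * k - 1)) ^ 2 * σ ^ 2 * A
        = 2 ^ 2 * σ ^ 2 * A / (2 * k - 1) ^ 2 := by
      rw [div_pow]; ring
    rw [hrw, le_div_iff₀ (by positivity)]
    calc Iε * (2 * k - 1) ^ 2 = 2 * ((2 * k - 1) * ((2 * k - 1) / 2 * Iε)) := by ring
      _ ≤ 2 * (2 * σ ^ 2 * A) := by linarith only [hc2]
      _ = 2 ^ 2 * σ ^ 2 * A := by ring
  -- sequence εₙ = 1/(n+2) → 0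
  set a : ℕ → ℝ := fun n => 1 / (n + 2) with hadef
  have ha_mem : ∀ n, a n ∈ Ioo (0:ℝ) 1 := by
    intro n
    constructor
    · positivity
    · rw [hadef]
      rw [div_lt_one (by positivity)]
      have : (0:ℝ) ≤ (n:ℝ) := Nat.cast_nonneg n
      linarith
  have ha_tend : Filter.Tendsto a Filter.atTop (nhds 0) := by
    rw [hadef]
    have h1 : Filter.Tendsto (fun n : ℕ => ((n:ℝ) + 2)) Filter.atTop Filter.atTop :=
      Filter.tendsto_atTop_add_const_right _ 2 tendsto_natCast_atTop_atTop
    simpa [one_div, Pi.inv_def] using h1.inv_tendsto_atTop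
  -- integrability on (0,1)
  have hfin : ∀ n : ℕ, IntegrableOn (fun x => (g x / x) ^ 2) (Ioc (a n) 1) := by
    intro n
    exact (((hu_cont.mono fun x hx => ⟨lt_of_lt_of_le (ha_mem n).1 hx.1, hx.2⟩).pow
      2).integrableOn_Icc).mono_set Ioc_subset_Icc_self
  have hbd : ∀ n : ℕ, (∫ x in Ioc (a n) 1, ‖(g x / x) ^ 2‖)
      ≤ (2 / (2 * k - 1)) ^ 2 * S ^ (4 * k) * A := by
    intro n
    have hnorm : ∀ x, ‖(g x / x) ^ 2‖ = (g x / x) ^ 2 := fun x => by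
      rw [Real.norm_eq_abs]; exact abs_of_nonneg (sq_nonneg _)
    simp only [hnorm]
    exact key (a n) (ha_mem n)
  have hIoc : IntegrableOn (fun x => (g x / x) ^ 2) (Ioc (0:ℝ) 1) :=
    integrableOn_Ioc_of_intervalIntegral_norm_bounded_left hfin ha_tend
      (Filter.Eventually.of_forall hbd)
  have hIoo : IntegrableOn (fun ξ => (g ξ / ξ) ^ 2) (Ioo (0:ℝ) 1) :=
    hIoc.mono_set Ioo_subset_Ioc_self
  refine ⟨hIoo, ?_⟩
  -- limit argument
  have hmono : Monotone fun n => Ioo (a n) (1:ℝ) := by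
    intro m n hmn
    apply Ioo_subset_Ioo_left
    rw [hadef]
    apply one_div_le_one_div_of_le (by positivity)
    have : (m:ℝ) ≤ (n:ℝ) := Nat.cast_le.2 hmn
    linarith
  have hUnion : (⋃ n, Ioo (a n) (1:ℝ)) = Ioo (0:ℝ) 1 := by
    ext x
    simp only [mem_iUnion, mem_Ioo]
    constructor
    · rintro ⟨n, h1, h2⟩
      exact ⟨(ha_mem n).1.trans h1, h2⟩
    · rintro ⟨h1, h2⟩
      have : ∀ᶠ n in Filter.atTop, a n < x := ha_tend.eventually_lt_const h1
      obtain ⟨n, hn⟩ := this.exists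
      exact ⟨n, hn, h2⟩
  have htend := tendsto_setIntegral_of_monotone (fun n => measurableSet_Ioo) hmono
    (f := fun ξ => (g ξ / ξ) ^ 2) (μ := volume) (by rw [hUnion]; exact hIoo)
  rw [hUnion] at htend
  apply le_of_tendsto htend
  apply Filter.Eventually.of_forall
  intro n
  rw [← integral_Ioc_eq_integral_Ioo]
  exact key (a n) (ha_mem n)
end

section
/- Let k > 1/2 and φ smooth with c ≤ φ(ξ)/ξ ≤ C on (0,1]. Suppose g is smooth with g(1) = 0 and both g/ξ^k and V*(g)/ξ^k lie in L²(0,1). Then g/ξ^k ∈ L^∞(0,1) and ‖g/ξ^k‖_{L^∞} ≤ C'(‖g/ξ^k‖_{L²} + ‖V*(g)/ξ^k‖_{L²}), with C' depending only on k and ‖ξ/φ‖_{L^∞}. -/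
open MeasureTheory Set

set_option maxHeartbeats 1000000 in
private lemma meas_aux (k : ℝ) (φ g : ℝ → ℝ) (hφ : Continuous φ) :
    Measurable (fun x => Vstar k φ g x / x ^ k) := by
  unfold Vstar
  have h1 := hφ.measurable
  have h2 : Measurable (deriv (fun x : ℝ => x ^ (-k) * g x)) := measurable_deriv _
  measurability

/-- vacuum-adapted Sobolev embedding
`‖g/ξ^k‖_{L^∞} ≤ C' (‖g/ξ^k‖_{L²} + ‖V*(g)/ξ^k‖_{L²})`, with `C'` depending only on
`k` and a bound `S` for `‖ξ/φ‖_{L^∞}`. -/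
theorem Linfty_embedding_critical (k S : ℝ) (hk : 1 / 2 < k) :
    ∃ C' : ℝ, 0 < C' ∧
      ∀ (φ g : ℝ → ℝ) (c C : ℝ), 0 < c → c ≤ C →
        ContDiff ℝ (⊤ : ℕ∞) φ →
        (∀ ξ ∈ Ioc (0:ℝ) 1, c ≤ φ ξ / ξ ∧ φ ξ / ξ ≤ C) →
        (∀ ξ ∈ Ioc (0:ℝ) 1, ξ / φ ξ ≤ S) →
        ContDiffOn ℝ (⊤ : ℕ∞) g (Ioc (0:ℝ) 1) → g 1 = 0 →
        IntegrableOn (fun ξ => (g ξ / ξ ^ k) ^ 2) (Ioo (0:ℝ) 1) →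
        IntegrableOn (fun ξ => (Vstar k φ g ξ / ξ ^ k) ^ 2) (Ioo (0:ℝ) 1) →
        ∀ ξ ∈ Ioc (0:ℝ) 1,
          |g ξ / ξ ^ k| ≤
            C' * (Real.sqrt (∫ x in Ioo (0:ℝ) 1, (g x / x ^ k) ^ 2)
              + Real.sqrt (∫ x in Ioo (0:ℝ) 1, (Vstar k φ g x / x ^ k) ^ 2)) := by
  have hk0 : (0:ℝ) < k := lt_trans (by norm_num) hk
  have h2k0 : (0:ℝ) < 2 * k := by linarith
  set S0 : ℝ := max S 1 with hS0def
  have hS01 : (1:ℝ) ≤ S0 := le_max_right _ _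
  have hS0pos : (0:ℝ) < S0 := lt_of_lt_of_le one_pos hS01
  refine ⟨S0 ^ (2*k), Real.rpow_pos_of_pos hS0pos _, ?_⟩
  intro φ g c C hc hcC hφ hbound hS hg hg1 hA hB ξ hξ
  obtain ⟨hξ0, hξ1⟩ := hξ
  set h : ℝ → ℝ := fun x => x ^ (-k) * g x with hhdef
  set u : ℝ → ℝ := fun x => Vstar k φ g x / x ^ k with hudef
  -- positivity of φ
  have hφpos : ∀ x ∈ Ioc (0:ℝ) 1, 0 < φ x := by
    intro x hx
    have h1 : 0 < φ x / x := lt_of_lt_of_le hc (hbound x hx).1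
    have h2 : φ x = (φ x / x) * x := (div_mul_cancel₀ (φ x) (ne_of_gt hx.1)).symm
    rw [h2]; exact mul_pos h1 hx.1
  -- relation between deriv h and Vstar
  have hderiv_eq : ∀ x ∈ Ioc (0:ℝ) 1,
      deriv h x = -(Vstar k φ g x) * x ^ k / φ x ^ (2*k) := by
    intro x hx
    have hx0 : (0:ℝ) < x := hx.1
    have hφx : (0:ℝ) < φ x := hφpos x hx
    have hφp : (0:ℝ) < φ x ^ (2*k) := Real.rpow_pos_of_pos hφx _
    have hxk : (0:ℝ) < x ^ k := Real.rpow_pos_of_pos hx0 _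
    have hxneg : x ^ (-k) = (x ^ k)⁻¹ := Real.rpow_neg hx0.le k
    have : Vstar k φ g x = -(φ x ^ (2*k)) * x ^ (-k) * deriv h x := rfl
    rw [this, hxneg]
    field_simp
  -- pointwise bound |deriv h| ≤ S0^(2k) * |u|
  have hptbd : ∀ x ∈ Ioc (0:ℝ) 1, |deriv h x| ≤ S0 ^ (2*k) * |u x| := by
    intro x hx
    have hx0 : (0:ℝ) < x := hx.1
    have hφx : (0:ℝ) < φ x := hφpos x hx
    have hφp : (0:ℝ) < φ x ^ (2*k) := Real.rpow_pos_of_pos hφx _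
    have hxk : (0:ℝ) < x ^ k := Real.rpow_pos_of_pos hx0 _
    have hxS : x ≤ S0 * φ x := by
      have := le_trans (hS x hx) (le_max_left S 1)
      calc x = (x / φ x) * φ x := by field_simp
        _ ≤ S0 * φ x := mul_le_mul_of_nonneg_right this hφx.le
    have hkey : x ^ k / φ x ^ (2*k) ≤ S0 ^ (2*k) / x ^ k := by
      rw [div_le_div_iff₀ hφp hxk]
      have h1 : x ^ k * x ^ k = x ^ (2*k) := by
        rw [← Real.rpow_add hx0]; ring_nf
      have h2 : S0 ^ (2*k) * φ x ^ (2*k) = (S0 * φ x) ^ (2*k) :=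
        (Real.mul_rpow hS0pos.le hφx.le).symm
      rw [h1, h2]
      exact Real.rpow_le_rpow hx0.le hxS h2k0.le
    have hueq : |u x| = |Vstar k φ g x| / x ^ k := by
      rw [hudef]; simp only []
      rw [abs_div, abs_of_pos hxk]
    rw [hderiv_eq x hx, abs_div, abs_mul, abs_neg, abs_of_pos hφp, abs_of_pos hxk,
      hueq, mul_div_assoc]
    calc |Vstar k φ g x| * (x ^ k / φ x ^ (2*k))
        ≤ |Vstar k φ g x| * (S0 ^ (2*k) / x ^ k) :=
          mul_le_mul_of_nonneg_left hkey (abs_nonneg _)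
      _ = S0 ^ (2*k) * (|Vstar k φ g x| / x ^ k) := by ring
  -- measurability of u
  have mu : Measurable u := meas_aux k φ g hφ.continuous
  have memL2 : MemLp u 2 (volume.restrict (Ioo (0:ℝ) 1)) :=
    (memLp_two_iff_integrable_sq mu.aestronglyMeasurable).2 hB
  have hIoo : Ioo ξ 1 ⊆ Ioo (0:ℝ) 1 := Ioo_subset_Ioo hξ0.le le_rfl
  have memL2' : MemLp u 2 (volume.restrict (Ioo ξ 1)) :=
    memL2.mono_measure (Measure.restrict_mono hIoo le_rfl)
  haveI : IsFiniteMeasure (volume.restrict (Ioo ξ 1)) :=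
    ⟨by rw [Measure.restrict_apply_univ]; exact measure_Ioo_lt_top⟩
  have huint : IntegrableOn u (Ioo ξ 1) := memL2'.integrable (by norm_num)
  -- continuity of h on [ξ,1]
  have hsub : Icc ξ 1 ⊆ Ioc (0:ℝ) 1 := fun x hx => ⟨lt_of_lt_of_le hξ0 hx.1, hx.2⟩
  have hcont : ContinuousOn h (Icc ξ 1) := by
    apply ContinuousOn.mul
    · exact ContinuousOn.rpow_const continuousOn_id
        (fun x hx => Or.inl (ne_of_gt (lt_of_lt_of_le hξ0 hx.1)))
    · exact (hg.continuousOn).mono hsub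
  -- differentiability of h on (ξ,1)
  have hderivAt : ∀ x ∈ Ioo ξ 1, HasDerivWithinAt h (deriv h x) (Ioi x) x := by
    intro x hx
    have hx0 : (0:ℝ) < x := lt_trans hξ0 hx.1
    have hgd : DifferentiableAt ℝ g x :=
      (hg.contDiffAt (Ioc_mem_nhds hx0 hx.2)).differentiableAt (by simp)
    have hrd : DifferentiableAt ℝ (fun y : ℝ => y ^ (-k)) x :=
      (Real.hasDerivAt_rpow_const (p := -k) (Or.inl (ne_of_gt hx0))).differentiableAt
    exact ((hrd.mul hgd).hasDerivAt).hasDerivWithinAt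
  -- integrability of deriv h on (ξ,1]
  have hbig : IntegrableOn (fun x => S0 ^ (2*k) * |u x|) (Ioc ξ 1) := by
    rw [IntegrableOn, ← Measure.restrict_congr_set Ioo_ae_eq_Ioc]
    exact huint.abs.const_mul _
  have hd_int : IntegrableOn (deriv h) (Ioc ξ 1) := by
    refine Integrable.mono hbig ((measurable_deriv h).aestronglyMeasurable) ?_
    rw [ae_restrict_iff' measurableSet_Ioc]
    filter_upwards with x hx
    rw [Real.norm_eq_abs, Real.norm_eq_abs]
    exact le_trans (hptbd x ⟨lt_trans hξ0 hx.1, hx.2⟩) (le_abs_self _)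
  have hint : IntervalIntegrable (deriv h) volume ξ 1 :=
    (intervalIntegrable_iff_integrableOn_Ioc_of_le hξ1).2 hd_int
  -- FTC
  have hFTC := intervalIntegral.integral_eq_sub_of_hasDeriv_right_of_le hξ1 hcont hderivAt hint
  have h1z : h 1 = 0 := by
    rw [hhdef]; simp [hg1]
  have hξval : h ξ = -∫ x in Ioo ξ 1, deriv h x := by
    rw [intervalIntegral.integral_of_le hξ1, integral_Ioc_eq_integral_Ioo, h1z] at hFTC
    linarith
  -- chain of bounds
  have step1 : |h ξ| ≤ ∫ x in Ioo ξ 1, |deriv h x| := by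
    rw [hξval, abs_neg]
    simpa [Real.norm_eq_abs] using
      norm_integral_le_integral_norm (μ := volume.restrict (Ioo ξ 1)) (deriv h)
  have hd_int' : IntegrableOn (deriv h) (Ioo ξ 1) := hd_int.mono_set Ioo_subset_Ioc_self
  have step2 : ∫ x in Ioo ξ 1, |deriv h x| ≤ ∫ x in Ioo ξ 1, S0 ^ (2*k) * |u x| := by
    apply setIntegral_mono_on hd_int'.abs (huint.abs.const_mul _) measurableSet_Ioo
    intro x hx
    exact hptbd x ⟨lt_trans hξ0 hx.1, hx.2.le⟩
  have step3 : ∫ x in Ioo ξ 1, S0 ^ (2*k) * |u x| = S0 ^ (2*k) * ∫ x in Ioo ξ 1, |u x| :=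
    integral_const_mul _ _
  -- Cauchy-Schwarz
  have hBnn : (0:ℝ) ≤ ∫ x in Ioo (0:ℝ) 1, u x ^ 2 :=
    integral_nonneg fun x => sq_nonneg _
  have hmono : ∫ x in Ioo ξ 1, u x ^ 2 ≤ ∫ x in Ioo (0:ℝ) 1, u x ^ 2 := by
    apply setIntegral_mono_set hB (ae_of_all _ fun x => sq_nonneg (u x))
    exact HasSubset.Subset.eventuallyLE hIoo
  have hCS : ∫ x in Ioo ξ 1, |u x| ≤ Real.sqrt (∫ x in Ioo (0:ℝ) 1, u x ^ 2) := by
    have hpq : Real.HolderConjugate 2 2 := Real.holderConjugate_iff.mpr ⟨one_lt_two, by norm_num⟩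
    have h2e : ENNReal.ofReal (2:ℝ) = 2 := by
      rw [ENNReal.ofReal_ofNat]
    have hmem : MemLp (fun x => |u x|) (ENNReal.ofReal 2) (volume.restrict (Ioo ξ 1)) := by
      rw [h2e]; exact memL2'.abs
    have hone : MemLp (fun _ : ℝ => (1:ℝ)) (ENNReal.ofReal 2) (volume.restrict (Ioo ξ 1)) :=
      memLp_const 1
    have hH := integral_mul_le_Lp_mul_Lq_of_nonneg hpq
      (ae_of_all _ fun x => abs_nonneg (u x)) (ae_of_all _ fun _ => zero_le_one) hmem hone
    simp only [mul_one] at hH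
    have e1 : ∀ x : ℝ, |u x| ^ (2:ℝ) = u x ^ 2 := by
      intro x
      rw [show (2:ℝ) = ((2:ℕ):ℝ) by norm_num, Real.rpow_natCast, sq_abs]
    have e2 : (∫ _x in Ioo ξ 1, (1:ℝ) ^ (2:ℝ)) = 1 - ξ := by
      simp [Real.volume_Ioo, ENNReal.toReal_ofReal (by linarith : (0:ℝ) ≤ 1 - ξ), hξ1]
    simp only [e1] at hH
    rw [e2] at hH
    calc ∫ x in Ioo ξ 1, |u x|
        ≤ (∫ x in Ioo ξ 1, u x ^ 2) ^ (1/2:ℝ) * (1 - ξ) ^ (1/2:ℝ) := hH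
      _ ≤ (∫ x in Ioo (0:ℝ) 1, u x ^ 2) ^ (1/2:ℝ) * 1 := by
          apply mul_le_mul
          · exact Real.rpow_le_rpow (integral_nonneg fun x => sq_nonneg _) hmono (by norm_num)
          · exact Real.rpow_le_one (by linarith) (by linarith) (by norm_num)
          · exact Real.rpow_nonneg (by linarith) _
          · exact Real.rpow_nonneg hBnn _
      _ = Real.sqrt (∫ x in Ioo (0:ℝ) 1, u x ^ 2) := by
          rw [mul_one, Real.sqrt_eq_rpow]
  -- assemble
  have hgh : g ξ / ξ ^ k = h ξ := by
    rw [hhdef]; simp only []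
    rw [Real.rpow_neg hξ0.le]
    ring
  have hfinal : |g ξ / ξ ^ k| ≤ S0 ^ (2*k) * Real.sqrt (∫ x in Ioo (0:ℝ) 1, u x ^ 2) := by
    rw [hgh]
    calc |h ξ| ≤ ∫ x in Ioo ξ 1, |deriv h x| := step1
      _ ≤ ∫ x in Ioo ξ 1, S0 ^ (2*k) * |u x| := step2
      _ = S0 ^ (2*k) * ∫ x in Ioo ξ 1, |u x| := step3
      _ ≤ S0 ^ (2*k) * Real.sqrt (∫ x in Ioo (0:ℝ) 1, u x ^ 2) := by
          exact mul_le_mul_of_nonneg_left hCS (Real.rpow_nonneg hS0pos.le _)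
  refine le_trans hfinal ?_
  apply mul_le_mul_of_nonneg_left _ (Real.rpow_nonneg hS0pos.le _)
  have := Real.sqrt_nonneg (∫ x in Ioo (0:ℝ) 1, (g x / x ^ k) ^ 2)
  have heq : (fun x => u x ^ 2) = fun x => (Vstar k φ g x / x ^ k) ^ 2 := rfl
  rw [show (∫ x in Ioo (0:ℝ) 1, u x ^ 2) = ∫ x in Ioo (0:ℝ) 1, (Vstar k φ g x / x ^ k) ^ 2 from rfl]
  linarith
end

section
/- Let k > 1/2 and φ smooth with c ≤ φ(ξ)/ξ ≤ C on (0,1]. Let 0 ≤ j < k − 1/2. Suppose g is smooth with g(1)=0 and g/ξ^j, g/ξ^{j+1}, V*(g)/ξ^j all lie in L²(0,1). Then g/ξ^j ∈ L^∞(0,1) with ‖g/ξ^j‖_{L^∞} ≤ C'(‖g/ξ^j‖_{L²} + ‖g/ξ^{j+1}‖_{L²} + ‖V*(g)/ξ^j‖_{L²}). -/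
open MeasureTheory Set

private lemma aux_finite' : IsFiniteMeasure (volume.restrict (Ioo (0:ℝ) 1)) := by
  constructor
  rw [Measure.restrict_apply_univ, Real.volume_Ioo]
  simp

private lemma l2_l1 {u : ℝ → ℝ} (hm : AEStronglyMeasurable u (volume.restrict (Ioo (0:ℝ) 1)))
    (h2 : IntegrableOn (fun x => u x ^ 2) (Ioo (0:ℝ) 1)) :
    IntegrableOn u (Ioo (0:ℝ) 1) ∧
    ∫ x in Ioo (0:ℝ) 1, |u x| ≤ Real.sqrt (∫ x in Ioo (0:ℝ) 1, u x ^ 2) := by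
  haveI := aux_finite'
  have hmem : MemLp u 2 (volume.restrict (Ioo (0:ℝ) 1)) :=
    (memLp_two_iff_integrable_sq hm).mpr h2
  have hint : IntegrableOn u (Ioo (0:ℝ) 1) := hmem.integrable one_le_two
  refine ⟨hint, ?_⟩
  have hconj : Real.HolderConjugate 2 2 := (Real.holderConjugate_iff_eq_conjExponent one_lt_two).mpr (by norm_num)
  have h1 : MemLp (fun x => |u x|) (ENNReal.ofReal 2) (volume.restrict (Ioo (0:ℝ) 1)) := by
    have : (ENNReal.ofReal 2) = 2 := by norm_num
    rw [this]; exact hmem.abs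
  have hcst : MemLp (fun _ : ℝ => (1:ℝ)) (ENNReal.ofReal 2) (volume.restrict (Ioo (0:ℝ) 1)) :=
    memLp_const 1
  have := integral_mul_le_Lp_mul_Lq_of_nonneg (μ := volume.restrict (Ioo (0:ℝ) 1)) hconj
    (f := fun x => |u x|) (g := fun _ => (1:ℝ))
    (Filter.Eventually.of_forall fun x => abs_nonneg _)
    (Filter.Eventually.of_forall fun x => zero_le_one) h1 hcst
  simp only [mul_one] at this
  have e1 : ∫ a in Ioo (0:ℝ) 1, |u a| ^ (2:ℝ) = ∫ a in Ioo (0:ℝ) 1, u a ^ 2 := by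
    refine integral_congr_ae (Filter.Eventually.of_forall fun a => ?_)
    simp [Real.rpow_natCast, sq_abs]
  have e2 : ∫ _ in Ioo (0:ℝ) 1, (1:ℝ) ^ (2:ℝ) = 1 := by
    simp [Real.volume_Ioo]
  rw [e1, e2] at this
  rw [Real.sqrt_eq_rpow]
  calc ∫ x in Ioo (0:ℝ) 1, |u x| ≤ _ := this
    _ = (∫ a in Ioo (0:ℝ) 1, u a ^ 2) ^ ((1:ℝ)/2) := by norm_num

private lemma deriv_identity (k j : ℝ) (φ g : ℝ → ℝ)
    (x : ℝ) (hx : x ∈ Ioo (0:ℝ) 1) (hφx : 0 < φ x)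
    (hgd : HasDerivAt g (deriv g x) x) :
    HasDerivAt (fun y => g y / y ^ j)
      ((k - j) * (g x / x ^ (j+1)) - (x / φ x) ^ (2*k) * (Vstar k φ g x / x ^ j)) x := by
  have hx0 : (0:ℝ) < x := hx.1
  have hxne : x ≠ 0 := hx0.ne'
  have hxj : x ^ j ≠ 0 := (Real.rpow_pos_of_pos hx0 j).ne'
  have hxk : x ^ k ≠ 0 := (Real.rpow_pos_of_pos hx0 k).ne'
  have hφk : φ x ^ k ≠ 0 := (Real.rpow_pos_of_pos hφx k).ne'
  have hφne : φ x ≠ 0 := hφx.ne'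
  have hD : HasDerivAt (fun y => y ^ (-k) * g y)
      ((-k) * x ^ (-k - 1) * g x + x ^ (-k) * deriv g x) x :=
    (Real.hasDerivAt_rpow_const (Or.inl hxne)).mul hgd
  have hDval : deriv (fun y => y ^ (-k) * g y) x
      = (-k) * x ^ (-k - 1) * g x + x ^ (-k) * deriv g x := hD.deriv
  have hq : HasDerivAt (fun y => g y / y ^ j)
      ((deriv g x * x ^ j - g x * (j * x ^ (j - 1))) / (x ^ j) ^ 2) x :=
    hgd.div (Real.hasDerivAt_rpow_const (Or.inl hxne)) hxj
  convert hq using 1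
  rw [Vstar, hDval]
  have e1 : x ^ (j + 1) = x ^ j * x := by
    rw [Real.rpow_add hx0, Real.rpow_one]
  have e2 : x ^ (j - 1) = x ^ j / x := by
    rw [Real.rpow_sub hx0, Real.rpow_one]
  have e3 : x ^ (-k) = (x ^ k)⁻¹ := by rw [Real.rpow_neg hx0.le]
  have e4 : x ^ (-k - 1) = (x ^ k * x)⁻¹ := by
    rw [show -k - 1 = -(k+1) by ring, Real.rpow_neg hx0.le, Real.rpow_add hx0, Real.rpow_one]
  have e5 : x ^ (2*k) = x ^ k * x ^ k := by
    rw [show 2*k = k + k by ring, Real.rpow_add hx0]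
  have e6 : φ x ^ (2*k) = φ x ^ k * φ x ^ k := by
    rw [show 2*k = k + k by ring, Real.rpow_add hφx]
  have e7 : (x / φ x) ^ (2*k) = x ^ (2*k) / φ x ^ (2*k) :=
    Real.div_rpow hx0.le hφx.le _
  rw [e7, e1, e2, e3, e4, e5, e6]
  field_simp
  ring

/-- subcritical `L^∞` embedding: for `0 ≤ j < k - 1/2`,
`‖g/ξ^j‖_{L^∞} ≤ C' (‖g/ξ^j‖_{L²} + ‖g/ξ^{j+1}‖_{L²} + ‖V*(g)/ξ^j‖_{L²})`. -/
theorem Linfty_embedding_subcritical (k j S : ℝ) (hk : 1 / 2 < k)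
    (hj0 : 0 ≤ j) (hj : j < k - 1 / 2) :
    ∃ C' : ℝ, 0 < C' ∧
      ∀ (φ g : ℝ → ℝ) (c C : ℝ), 0 < c → c ≤ C →
        ContDiff ℝ (⊤ : ℕ∞) φ →
        (∀ ξ ∈ Ioc (0:ℝ) 1, c ≤ φ ξ / ξ ∧ φ ξ / ξ ≤ C) →
        (∀ ξ ∈ Ioc (0:ℝ) 1, ξ / φ ξ ≤ S) →
        ContDiffOn ℝ (⊤ : ℕ∞) g (Ioc (0:ℝ) 1) → g 1 = 0 →
        IntegrableOn (fun ξ => (g ξ / ξ ^ j) ^ 2) (Ioo (0:ℝ) 1) →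
        IntegrableOn (fun ξ => (g ξ / ξ ^ (j + 1)) ^ 2) (Ioo (0:ℝ) 1) →
        IntegrableOn (fun ξ => (Vstar k φ g ξ / ξ ^ j) ^ 2) (Ioo (0:ℝ) 1) →
        ∀ ξ ∈ Ioc (0:ℝ) 1,
          |g ξ / ξ ^ j| ≤
            C' * (Real.sqrt (∫ x in Ioo (0:ℝ) 1, (g x / x ^ j) ^ 2)
              + Real.sqrt (∫ x in Ioo (0:ℝ) 1, (g x / x ^ (j + 1)) ^ 2)
              + Real.sqrt (∫ x in Ioo (0:ℝ) 1, (Vstar k φ g x / x ^ j) ^ 2)) := by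
  set M : ℝ := (max S 1) ^ (2*k) with hM
  have hM0 : 0 < M := Real.rpow_pos_of_pos (lt_max_of_lt_right one_pos) _
  have hkj : 0 < k - j := by linarith
  refine ⟨(k - j) + M, by linarith, ?_⟩
  intro φ g c C hc hcC hφ hφb hφS hg hg1 hI1 hI2 hI3 ξ hξ
  -- positivity of φ on Ioc 0 1
  have hφpos : ∀ x ∈ Ioo (0:ℝ) 1, 0 < φ x := by
    intro x hx
    have h1 := (hφb x ⟨hx.1, hx.2.le⟩).1
    have : 0 < φ x / x := lt_of_lt_of_le hc h1
    have := mul_pos this hx.1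
    rwa [div_mul_cancel₀] at this
    exact hx.1.ne'
  -- g differentiable on Ioo
  have hgd : ∀ x ∈ Ioo (0:ℝ) 1, HasDerivAt g (deriv g x) x := by
    intro x hx
    have hmem : Ioc (0:ℝ) 1 ∈ nhds x := Ioc_mem_nhds hx.1 hx.2
    exact ((hg.contDiffAt hmem).differentiableAt (by simp)).hasDerivAt
  -- the derivative function
  set F : ℝ → ℝ := fun x =>
    (k - j) * (g x / x ^ (j+1)) - (x / φ x) ^ (2*k) * (Vstar k φ g x / x ^ j) with hF
  have hder : ∀ x ∈ Ioo (0:ℝ) 1, HasDerivAt (fun y => g y / y ^ j) (F x) x := fun x hx =>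
    deriv_identity k j φ g x hx (hφpos x hx) (hgd x hx)
  -- measurability of the pieces
  have hmes_u3 : AEStronglyMeasurable (fun x => Vstar k φ g x / x ^ j)
      (volume.restrict (Ioo (0:ℝ) 1)) := by
    have hφm : Measurable φ := hφ.continuous.measurable
    have hd : Measurable (deriv fun x : ℝ => x ^ (-k) * g x) := measurable_deriv _
    apply Measurable.aestronglyMeasurable
    simp only [Vstar]
    exact (((hφm.pow measurable_const).neg.mul (measurable_id.pow measurable_const)).mul hd).div
      (measurable_id.pow measurable_const)
  have hmes_u2 : AEStronglyMeasurable (fun x => g x / x ^ (j+1))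
      (volume.restrict (Ioo (0:ℝ) 1)) := by
    refine ContinuousOn.aestronglyMeasurable ?_ measurableSet_Ioo
    refine ContinuousOn.div (hg.continuousOn.mono Ioo_subset_Ioc_self) ?_ ?_
    · exact continuousOn_id.rpow_const fun x hx => Or.inl hx.1.ne'
    · exact fun x hx => (Real.rpow_pos_of_pos hx.1 _).ne'
  have hmes_u1 : AEStronglyMeasurable (fun x => g x / x ^ j)
      (volume.restrict (Ioo (0:ℝ) 1)) := by
    refine ContinuousOn.aestronglyMeasurable ?_ measurableSet_Ioo
    refine ContinuousOn.div (hg.continuousOn.mono Ioo_subset_Ioc_self) ?_ ?_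
    · exact continuousOn_id.rpow_const fun x hx => Or.inl hx.1.ne'
    · exact fun x hx => (Real.rpow_pos_of_pos hx.1 _).ne'
  obtain ⟨hint1, hcs1⟩ := l2_l1 hmes_u1 hI1
  obtain ⟨hint2, hcs2⟩ := l2_l1 hmes_u2 hI2
  obtain ⟨hint3, hcs3⟩ := l2_l1 hmes_u3 hI3
  -- weight bound
  have hw : ∀ x ∈ Ioo (0:ℝ) 1, 0 ≤ (x / φ x) ^ (2*k) ∧ (x / φ x) ^ (2*k) ≤ M := by
    intro x hx
    have hb0 : 0 ≤ x / φ x := div_nonneg hx.1.le (hφpos x hx).le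
    constructor
    · positivity
    · exact Real.rpow_le_rpow hb0
        (le_trans (hφS x ⟨hx.1, hx.2.le⟩) (le_max_left _ _)) (by linarith)
  -- the dominating function
  set G : ℝ → ℝ := fun x => (k - j) * |g x / x ^ (j+1)| + M * |Vstar k φ g x / x ^ j| with hG
  have hGint : IntegrableOn G (Ioo (0:ℝ) 1) :=
    ((hint2.abs.const_mul _).add (hint3.abs.const_mul _))
  have hGnn : ∀ x, 0 ≤ G x := by
    intro x
    have := abs_nonneg (g x / x ^ (j+1))
    have := abs_nonneg (Vstar k φ g x / x ^ j)
    positivity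
  have hFle : ∀ x ∈ Ioo (0:ℝ) 1, |F x| ≤ G x := by
    intro x hx
    obtain ⟨hw0, hwM⟩ := hw x hx
    calc |F x| ≤ |(k - j) * (g x / x ^ (j+1))| + |(x / φ x) ^ (2*k) * (Vstar k φ g x / x ^ j)| :=
          abs_sub _ _
      _ ≤ G x := by
          rw [abs_mul, abs_mul, abs_of_nonneg hkj.le, abs_of_nonneg hw0]
          exact add_le_add (le_refl _)
            (mul_le_mul_of_nonneg_right hwM (abs_nonneg _))
  -- F is integrable on Ioo 0 1
  have hFmes : AEStronglyMeasurable F (volume.restrict (Ioo (0:ℝ) 1)) := by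
    apply AEStronglyMeasurable.sub
    · exact hmes_u2.const_mul _
    · apply AEStronglyMeasurable.mul _ hmes_u3
      refine ContinuousOn.aestronglyMeasurable ?_ measurableSet_Ioo
      refine ContinuousOn.rpow_const ?_ fun x hx => Or.inr (by linarith)
      exact ContinuousOn.div continuousOn_id hφ.continuous.continuousOn
        fun x hx => (hφpos x hx).ne'
  have hFint : IntegrableOn F (Ioo (0:ℝ) 1) := by
    refine Integrable.mono' hGint hFmes ?_
    filter_upwards [ae_restrict_mem measurableSet_Ioo] with x hx
    rw [Real.norm_eq_abs]
    exact hFle x hx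
  -- interval integrability on [ξ,1]
  have hξ0 : (0:ℝ) < ξ := hξ.1
  have hsub : Ioo ξ 1 ⊆ Ioo (0:ℝ) 1 := Ioo_subset_Ioo hξ0.le le_rfl
  have hFii : IntervalIntegrable F volume ξ 1 := by
    rw [intervalIntegrable_iff_integrableOn_Ioc_of_le hξ.2]
    rw [integrableOn_Ioc_iff_integrableOn_Ioo]
    exact hFint.mono_set hsub
  -- FTC
  have hcont : ContinuousOn (fun y => g y / y ^ j) (Icc ξ 1) := by
    refine ContinuousOn.mono ?_ (fun y hy => ⟨lt_of_lt_of_le hξ0 hy.1, hy.2⟩ : Icc ξ 1 ⊆ Ioc 0 1)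
    refine ContinuousOn.div hg.continuousOn ?_ ?_
    · exact continuousOn_id.rpow_const fun x hx => Or.inl hx.1.ne'
    · exact fun x hx => (Real.rpow_pos_of_pos hx.1 _).ne'
  have hftc : ∫ y in ξ..1, F y = g 1 / (1:ℝ) ^ j - g ξ / ξ ^ j := by
    refine intervalIntegral.integral_eq_sub_of_hasDeriv_right_of_le hξ.2 hcont ?_ hFii
    intro x hx
    exact ((hder x (hsub hx)).hasDerivWithinAt)
  have h1j : g 1 / (1:ℝ) ^ j = 0 := by rw [Real.one_rpow, hg1]; simp
  rw [h1j, zero_sub] at hftc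
  have habs : |g ξ / ξ ^ j| = |∫ y in ξ..1, F y| := by rw [hftc, abs_neg]
  -- chain of bounds
  have hIoc : ∫ y in Ioc ξ 1, |F y| = ∫ y in Ioo ξ 1, |F y| := integral_Ioc_eq_integral_Ioo
  have step1 : |g ξ / ξ ^ j| ≤ ∫ y in Ioo ξ 1, |F y| := by
    rw [habs, ← hIoc]
    calc |∫ y in ξ..1, F y| ≤ ∫ y in ξ..1, |F y| :=
          intervalIntegral.abs_integral_le_integral_abs hξ.2
      _ = ∫ y in Ioc ξ 1, |F y| := intervalIntegral.integral_of_le hξ.2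
  have step2 : ∫ y in Ioo ξ 1, |F y| ≤ ∫ y in Ioo ξ 1, G y := by
    refine setIntegral_mono_on ((hFint.mono_set hsub).abs) (hGint.mono_set hsub)
      measurableSet_Ioo ?_
    intro x hx
    exact hFle x (hsub hx)
  have step3 : ∫ y in Ioo ξ 1, G y ≤ ∫ y in Ioo (0:ℝ) 1, G y := by
    refine setIntegral_mono_set hGint ?_ (HasSubset.Subset.eventuallyLE hsub)
    exact Filter.Eventually.of_forall fun x => hGnn x
  have step4 : ∫ y in Ioo (0:ℝ) 1, G y
      = (k - j) * (∫ y in Ioo (0:ℝ) 1, |g y / y ^ (j+1)|)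
        + M * ∫ y in Ioo (0:ℝ) 1, |Vstar k φ g y / y ^ j| := by
    rw [integral_add (hint2.abs.const_mul _) (hint3.abs.const_mul _),
      integral_const_mul, integral_const_mul]
  have sqrt1 : 0 ≤ Real.sqrt (∫ x in Ioo (0:ℝ) 1, (g x / x ^ j) ^ 2) := Real.sqrt_nonneg _
  have sqrt2 := Real.sqrt_nonneg (∫ x in Ioo (0:ℝ) 1, (g x / x ^ (j+1)) ^ 2)
  have sqrt3 := Real.sqrt_nonneg (∫ x in Ioo (0:ℝ) 1, (Vstar k φ g x / x ^ j) ^ 2)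
  calc |g ξ / ξ ^ j| ≤ ∫ y in Ioo ξ 1, |F y| := step1
    _ ≤ ∫ y in Ioo (0:ℝ) 1, G y := le_trans step2 step3
    _ = (k - j) * (∫ y in Ioo (0:ℝ) 1, |g y / y ^ (j+1)|)
        + M * ∫ y in Ioo (0:ℝ) 1, |Vstar k φ g y / y ^ j| := step4
    _ ≤ (k - j) * Real.sqrt (∫ x in Ioo (0:ℝ) 1, (g x / x ^ (j+1)) ^ 2)
        + M * Real.sqrt (∫ x in Ioo (0:ℝ) 1, (Vstar k φ g x / x ^ j) ^ 2) := by
          exact add_le_add (mul_le_mul_of_nonneg_left hcs2 hkj.le)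
            (mul_le_mul_of_nonneg_left hcs3 hM0.le)
    _ ≤ ((k - j) + M) * (Real.sqrt (∫ x in Ioo (0:ℝ) 1, (g x / x ^ j) ^ 2)
        + Real.sqrt (∫ x in Ioo (0:ℝ) 1, (g x / x ^ (j + 1)) ^ 2)
        + Real.sqrt (∫ x in Ioo (0:ℝ) 1, (Vstar k φ g x / x ^ j) ^ 2)) := by nlinarith
end

section
/- Let k > 1/2 and φ smooth with c ≤ φ(ξ)/ξ ≤ C on (0,1]. For any g ∈ Y^{k,1} (i.e., g, V*(g) ∈ L²(0,1) with g(1)=0) and any ε > 0, there exists a constant C_ε such that |g(ξ)| ≤ ε √ξ + C_ε ξ^k for all ξ ∈ (0,1]. -/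
open MeasureTheory Set


lemma cs_aux {a b : ℝ} (hab : a ≤ b) {f g : ℝ → ℝ}
    (hf : ContinuousOn f (Icc a b)) (hg : ContinuousOn g (Icc a b)) :
    ∫ t in a..b, |f t| * |g t| ≤
      Real.sqrt (∫ t in a..b, (f t) ^ 2) * Real.sqrt (∫ t in a..b, (g t) ^ 2) := by
  have hpq : Real.HolderConjugate 2 2 := Real.HolderConjugate.two_two
  have hmem : ∀ {u : ℝ → ℝ}, ContinuousOn u (Icc a b) →
      MemLp u (ENNReal.ofReal 2) (volume.restrict (Ioc a b)) := by
    intro u hu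
    obtain ⟨Cu, hCu⟩ := isCompact_Icc.exists_bound_of_continuousOn hu
    refine MemLp.of_bound ((hu.mono Ioc_subset_Icc_self).aestronglyMeasurable
      measurableSet_Ioc) Cu ?_
    exact (ae_restrict_iff' measurableSet_Ioc).2 (Filter.Eventually.of_forall
      fun x hx => hCu x (Ioc_subset_Icc_self hx))
  have key := integral_mul_norm_le_Lp_mul_Lq (μ := volume.restrict (Ioc a b))
    (f := f) (g := g) hpq (hmem hf) (hmem hg)
  have h2 : ∀ u : ℝ → ℝ, ∀ x : ℝ, ‖u x‖ ^ (2:ℝ) = (u x) ^ 2 := by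
    intro u x
    rw [show ((2:ℝ)) = ((2:ℕ):ℝ) by norm_num, Real.rpow_natCast, Real.norm_eq_abs, sq_abs]
  have ef : ∫ t in Ioc a b, ‖f t‖ ^ (2:ℝ) = ∫ t in Ioc a b, (f t) ^ 2 :=
    integral_congr_ae (Filter.Eventually.of_forall fun x => h2 f x)
  have eg : ∫ t in Ioc a b, ‖g t‖ ^ (2:ℝ) = ∫ t in Ioc a b, (g t) ^ 2 :=
    integral_congr_ae (Filter.Eventually.of_forall fun x => h2 g x)
  rw [ef, eg] at key
  rw [intervalIntegral.integral_of_le hab, intervalIntegral.integral_of_le hab,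
    intervalIntegral.integral_of_le hab]
  calc ∫ t in Ioc a b, |f t| * |g t| = ∫ t in Ioc a b, ‖f t‖ * ‖g t‖ := by
        simp only [Real.norm_eq_abs]
    _ ≤ (∫ t in Ioc a b, (f t)^2) ^ ((1:ℝ)/2) * (∫ t in Ioc a b, (g t)^2) ^ ((1:ℝ)/2) := key
    _ = _ := by rw [← Real.sqrt_eq_rpow, ← Real.sqrt_eq_rpow]

lemma small_tail {V : ℝ → ℝ} (hV : IntegrableOn (fun t => (V t)^2) (Ioo (0:ℝ) 1)) {δ : ℝ}
    (hδ : 0 < δ) :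
    ∃ b : ℝ, 0 < b ∧ b ≤ 1/2 ∧ ∫ t in Ioc 0 b, (V t)^2 < δ := by
  have hanti : Antitone (fun n : ℕ => Ioc (0:ℝ) (((n:ℝ)+2)⁻¹)) := by
    intro n m hnm
    refine Ioc_subset_Ioc le_rfl ?_
    apply inv_anti₀ (by positivity)
    have : (n:ℝ) ≤ (m:ℝ) := Nat.cast_le.2 hnm
    linarith
  have hfi : ∃ n : ℕ, IntegrableOn (fun t => (V t)^2) (Ioc (0:ℝ) (((n:ℝ)+2)⁻¹)) volume := by
    refine ⟨0, hV.mono_set fun x hx => ⟨hx.1, lt_of_le_of_lt hx.2 (by norm_num)⟩⟩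
  have htend := tendsto_setIntegral_of_antitone (fun n : ℕ => measurableSet_Ioc) hanti hfi
  have hempty : ⋂ n : ℕ, Ioc (0:ℝ) (((n:ℝ)+2)⁻¹) = ∅ := by
    ext x
    simp only [mem_iInter, mem_Ioc, mem_empty_iff_false, iff_false, not_forall, not_and, not_le]
    rcases le_or_gt x 0 with hx | hx
    · exact ⟨0, fun h => absurd h (not_lt.2 hx)⟩
    · obtain ⟨n, hn⟩ := exists_nat_gt x⁻¹
      exact ⟨n, fun _ => by
        rw [inv_lt_comm₀ (by positivity) hx]
        linarith⟩
  rw [hempty, Measure.restrict_empty, integral_zero_measure] at htend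
  obtain ⟨n, hn⟩ := (htend.eventually_lt_const hδ).exists
  refine ⟨((n:ℝ)+2)⁻¹, by positivity, ?_, hn⟩
  rw [show (1:ℝ)/2 = (2:ℝ)⁻¹ by norm_num]
  apply inv_anti₀ (by norm_num)
  have : (0:ℝ) ≤ (n:ℝ) := Nat.cast_nonneg n
  linarith

/-- boundary behavior forced by the `Y^{k,1}`-norm: for `g` with
`g, V*(g) ∈ L²(0,1)` and `g(1) = 0`, and any `ε > 0`, there is `C_ε` with
`|g(ξ)| ≤ ε √ξ + C_ε ξ^k` on `(0,1]`. -/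
theorem boundary_behavior (k : ℝ) (hk : 1 / 2 < k) (φ g : ℝ → ℝ) (c C : ℝ)
    (hc : 0 < c) (hcC : c ≤ C)
    (hφ : ContDiff ℝ (⊤ : ℕ∞) φ)
    (hb : ∀ ξ ∈ Ioc (0:ℝ) 1, c ≤ φ ξ / ξ ∧ φ ξ / ξ ≤ C)
    (hgsmooth : ContDiffOn ℝ (⊤ : ℕ∞) g (Ioc (0:ℝ) 1)) (hg1 : g 1 = 0)
    (hg : IntegrableOn (fun ξ => (g ξ) ^ 2) (Ioo (0:ℝ) 1))
    (hVg : IntegrableOn (fun ξ => (Vstar k φ g ξ) ^ 2) (Ioo (0:ℝ) 1)) :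
    ∀ ε > (0:ℝ), ∃ Cε : ℝ, ∀ ξ ∈ Ioc (0:ℝ) 1,
      |g ξ| ≤ ε * Real.sqrt ξ + Cε * ξ ^ k := by
  intro ε hε
  have hk0 : 0 < k := by linarith
  have h2k1 : 0 < 2*k - 1 := by linarith
  have hs2 : 0 < Real.sqrt (2*k-1) := Real.sqrt_pos.2 h2k1
  have hc2k : 0 < c ^ (2*k) := Real.rpow_pos_of_pos hc _
  set δ : ℝ := ε * c ^ (2*k) * Real.sqrt (2*k-1) with hδdef
  have hδ : 0 < δ := by positivity
  obtain ⟨b, hb0, hb2, hbint⟩ := small_tail hVg (show (0:ℝ) < δ^2 by positivity)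
  have hb1 : b < 1 := lt_of_le_of_lt hb2 (by norm_num)
  have hIccsub : Icc b 1 ⊆ Ioc (0:ℝ) 1 := fun x hx => ⟨lt_of_lt_of_le hb0 hx.1, hx.2⟩
  obtain ⟨M, hM⟩ := isCompact_Icc.exists_bound_of_continuousOn
      (hgsmooth.continuousOn.mono hIccsub)
  have hM0 : 0 ≤ M := le_trans (norm_nonneg _) (hM 1 ⟨hb1.le, le_rfl⟩)
  have hbk : 0 < b ^ (-k) := Real.rpow_pos_of_pos hb0 _
  refine ⟨M * b ^ (-k), fun ξ hξ => ?_⟩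
  have hξ0 : 0 < ξ := hξ.1
  have hsqrtξ : 0 ≤ ε * Real.sqrt ξ := by positivity
  have hξk : 0 < ξ ^ k := Real.rpow_pos_of_pos hξ0 _
  rcases lt_or_ge b ξ with hcase | hcase
  · -- easy case b < ξ
    have h1 : |g ξ| ≤ M := by rw [← Real.norm_eq_abs]; exact hM ξ ⟨hcase.le, hξ.2⟩
    have h2 : b ^ k ≤ ξ ^ k := Real.rpow_le_rpow hb0.le hcase.le hk0.le
    have h3 : M = (M * b ^ (-k)) * b ^ k := by
      rw [mul_assoc, ← Real.rpow_add hb0]; simp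
    have h4 : (M * b ^ (-k)) * b ^ k ≤ (M * b ^ (-k)) * ξ ^ k :=
      mul_le_mul_of_nonneg_left h2 (by positivity)
    calc |g ξ| ≤ M := h1
      _ = (M * b ^ (-k)) * b ^ k := h3
      _ ≤ (M * b ^ (-k)) * ξ ^ k := h4
      _ ≤ ε * Real.sqrt ξ + (M * b ^ (-k)) * ξ ^ k := le_add_of_nonneg_left hsqrtξ
  · -- main case ξ ≤ b
    set F : ℝ → ℝ := fun x => x ^ (-k) * g x with hF
    have hsub : Icc ξ b ⊆ Ioo (0:ℝ) 1 := fun x hx =>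
      ⟨lt_of_lt_of_le hξ0 hx.1, lt_of_le_of_lt hx.2 hb1⟩
    have hIoosub : Ioo (0:ℝ) 1 ⊆ Ioc 0 1 := Ioo_subset_Ioc_self
    have hFdiff : ∀ t ∈ Ioo (0:ℝ) 1, DifferentiableAt ℝ F t := by
      intro t ht
      have hg' : DifferentiableAt ℝ g t :=
        (hgsmooth.contDiffAt (Ioc_mem_nhds ht.1 ht.2)).differentiableAt (by simp)
      have hr : DifferentiableAt ℝ (fun x : ℝ => x ^ (-k)) t :=
        (Real.hasDerivAt_rpow_const (p := -k) (Or.inl ht.1.ne')).differentiableAt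
      exact hr.mul hg'
    have hFsmooth : ContDiffOn ℝ (⊤ : ℕ∞) F (Ioo (0:ℝ) 1) := by
      apply ContDiffOn.mul
      · intro t ht
        exact (Real.contDiffAt_rpow_const_of_ne (p := -k) ht.1.ne').contDiffWithinAt
      · exact hgsmooth.mono hIoosub
    have hderivF_cont : ContinuousOn (deriv F) (Ioo (0:ℝ) 1) :=
      hFsmooth.continuousOn_deriv_of_isOpen isOpen_Ioo (by simp)
    have hφpos : ∀ t ∈ Ioo (0:ℝ) 1, 0 < φ t := fun t ht =>
      lt_of_lt_of_le (mul_pos hc ht.1) ((le_div_iff₀ ht.1).1 (hb t (hIoosub ht)).1)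
    have hVrel : ∀ t ∈ Ioo (0:ℝ) 1, deriv F t = -(Vstar k φ g t) * t ^ k / (φ t ^ (2*k)) := by
      intro t ht
      have hA : (0:ℝ) < φ t ^ (2*k) := Real.rpow_pos_of_pos (hφpos t ht) _
      have hBt : t ^ (-k) * t ^ k = 1 := by
        rw [← Real.rpow_add ht.1]; simp
      have e : -(Vstar k φ g t) * t ^ k / (φ t ^ (2*k))
          = (t ^ (-k) * t ^ k) * deriv F t * (φ t ^ (2*k) / φ t ^ (2*k)) := by
        simp only [Vstar, ← hF]; ring
      rw [e, hBt, div_self hA.ne', one_mul, mul_one]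
    have hptbd : ∀ t ∈ Icc ξ b, |deriv F t| ≤
        c ^ (-(2*k)) * (|Vstar k φ g t| * |t ^ (-k)|) := by
      intro t ht
      have ht' := hsub ht
      have ht0 : 0 < t := ht'.1
      have hA : (0:ℝ) < φ t ^ (2*k) := Real.rpow_pos_of_pos (hφpos t ht') _
      have htk : (0:ℝ) < t ^ k := Real.rpow_pos_of_pos ht0 _
      have htnk : (0:ℝ) < t ^ (-k) := Real.rpow_pos_of_pos ht0 _
      have ht2k : (0:ℝ) < t ^ (2*k) := Real.rpow_pos_of_pos ht0 _
      have hAc : c ^ (2*k) * t ^ (2*k) ≤ φ t ^ (2*k) := by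
        rw [← Real.mul_rpow hc.le ht0.le]
        exact Real.rpow_le_rpow (by positivity)
          ((le_div_iff₀ ht0).1 (hb t (hIoosub ht')).1) (by linarith)
      have h1 : |deriv F t| = |Vstar k φ g t| * t ^ k / (φ t ^ (2*k)) := by
        rw [hVrel t ht', abs_div, abs_mul, abs_neg, abs_of_pos htk, abs_of_pos hA]
      have h2 : |Vstar k φ g t| * t ^ k / (φ t ^ (2*k)) ≤
          |Vstar k φ g t| * t ^ k / (c ^ (2*k) * t ^ (2*k)) := by
        apply div_le_div_of_nonneg_left (by positivity) (by positivity) hAc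
      have e1 : t ^ k / t ^ (2*k) = t ^ (-k) := by
        rw [← Real.rpow_sub ht0]; congr 1; ring
      have h3 : |Vstar k φ g t| * t ^ k / (c ^ (2*k) * t ^ (2*k)) =
          c ^ (-(2*k)) * (|Vstar k φ g t| * |t ^ (-k)|) := by
        rw [abs_of_pos htnk, Real.rpow_neg hc.le, ← e1]
        field_simp
      rw [h1]
      exact h2.trans_eq h3
    have hICC : uIcc ξ b = Icc ξ b := uIcc_of_le hcase
    have hcontD : ContinuousOn (deriv F) (Icc ξ b) := hderivF_cont.mono hsub
    have hint : IntervalIntegrable (deriv F) volume ξ b := by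
      apply ContinuousOn.intervalIntegrable; rwa [hICC]
    have hftc : ∫ t in ξ..b, deriv F t = F b - F ξ :=
      intervalIntegral.integral_deriv_eq_sub
        (fun t ht => hFdiff t (hsub (hICC ▸ ht))) hint
    have hconterpk : ContinuousOn (fun t : ℝ => t ^ (-k)) (Icc ξ b) := fun t ht =>
      (Real.continuousAt_rpow_const t (-k) (Or.inl (hsub ht).1.ne')).continuousWithinAt
    have hVcont : ContinuousOn (fun t => Vstar k φ g t) (Icc ξ b) := by
      have h1 : ContinuousOn (fun t : ℝ => -(φ t ^ (2*k)) * t ^ (-k)) (Icc ξ b) := by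
        apply ContinuousOn.mul
        · exact ((hφ.continuous.rpow_const (fun x => Or.inr (by linarith))).neg).continuousOn
        · exact hconterpk
      exact h1.mul hcontD
    have hmono : ∫ t in ξ..b, |deriv F t| ≤
        ∫ t in ξ..b, c ^ (-(2*k)) * (|Vstar k φ g t| * |t ^ (-k)|) := by
      apply intervalIntegral.integral_mono_on hcase hint.abs
      · apply ContinuousOn.intervalIntegrable
        rw [hICC]
        exact continuousOn_const.mul (hVcont.abs.mul hconterpk.abs)
      · exact hptbd
    have hconst : ∫ t in ξ..b, c ^ (-(2*k)) * (|Vstar k φ g t| * |t ^ (-k)|) =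
        c ^ (-(2*k)) * ∫ t in ξ..b, |Vstar k φ g t| * |t ^ (-k)| :=
      intervalIntegral.integral_const_mul _ _
    have hCS := cs_aux hcase hVcont hconterpk
    have hV2 : ∫ t in ξ..b, (Vstar k φ g t)^2 ≤ ∫ t in Ioc (0:ℝ) b, (Vstar k φ g t)^2 := by
      rw [intervalIntegral.integral_of_le hcase]
      apply setIntegral_mono_set
      · exact hVg.mono_set (fun x hx => ⟨hx.1, lt_of_le_of_lt hx.2 hb1⟩)
      · exact Filter.Eventually.of_forall (fun x => sq_nonneg _)
      · exact HasSubset.Subset.eventuallyLE (Ioc_subset_Ioc hξ0.le le_rfl)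
    have hsq1 : Real.sqrt (∫ t in ξ..b, (Vstar k φ g t)^2) ≤ δ := by
      calc Real.sqrt (∫ t in ξ..b, (Vstar k φ g t)^2)
          ≤ Real.sqrt (∫ t in Ioc (0:ℝ) b, (Vstar k φ g t)^2) := Real.sqrt_le_sqrt hV2
        _ ≤ Real.sqrt (δ^2) := Real.sqrt_le_sqrt hbint.le
        _ = δ := Real.sqrt_sq hδ.le
    have hrpowsq : EqOn (fun t : ℝ => ((fun t : ℝ => t ^ (-k)) t)^2)
        (fun t : ℝ => t ^ (-(2*k))) (uIcc ξ b) := by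
      intro t ht
      rw [hICC] at ht
      have ht0 : 0 < t := (hsub ht).1
      show (t ^ (-k))^2 = t ^ (-(2*k))
      rw [← Real.rpow_natCast (t ^ (-k)) 2, ← Real.rpow_mul ht0.le]
      congr 1; push_cast; ring
    have hrVal : ∫ t in ξ..b, ((t:ℝ) ^ (-k))^2 = ∫ t in ξ..b, (t:ℝ) ^ (-(2*k)) :=
      intervalIntegral.integral_congr hrpowsq
    have h0not : (0:ℝ) ∉ uIcc ξ b := by
      rw [hICC]; exact fun h => absurd h.1 (not_le.2 hξ0)
    have hrpowint : ∫ t in ξ..b, (t:ℝ) ^ (-(2*k)) =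
        (b ^ (-(2*k)+1) - ξ ^ (-(2*k)+1)) / (-(2*k)+1) :=
      integral_rpow (Or.inr ⟨by intro h; linarith, h0not⟩)
    have hrpowle : ∫ t in ξ..b, (t:ℝ) ^ (-(2*k)) ≤ ξ ^ (1-2*k) / (2*k-1) := by
      rw [hrpowint]
      have hbnn : 0 ≤ b ^ (-(2*k)+1) := Real.rpow_nonneg hb0.le _
      have hex : ξ ^ (-(2*k)+1) = ξ ^ (1-2*k) := by congr 1; ring
      have e : (b ^ (-(2*k)+1) - ξ ^ (-(2*k)+1)) / (-(2*k)+1)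
          = (ξ ^ (1-2*k) - b ^ (-(2*k)+1)) / (2*k-1) := by
        rw [hex]
        have hne : -(2*k)+1 ≠ 0 := by intro h; linarith
        have hne2 : 2*k-1 ≠ 0 := by intro h; linarith
        field_simp
        ring
      rw [e]
      gcongr
      linarith
    have hsqval : Real.sqrt (ξ ^ (1-2*k)) = ξ ^ ((1-2*k)/2) := by
      rw [Real.sqrt_eq_rpow, ← Real.rpow_mul hξ0.le]
      congr 1; ring
    have hsq2 : Real.sqrt (∫ t in ξ..b, ((t:ℝ) ^ (-k))^2) ≤
        ξ ^ ((1-2*k)/2) / Real.sqrt (2*k-1) := by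
      rw [hrVal]
      calc Real.sqrt (∫ t in ξ..b, (t:ℝ) ^ (-(2*k)))
          ≤ Real.sqrt (ξ ^ (1-2*k) / (2*k-1)) := Real.sqrt_le_sqrt hrpowle
        _ = Real.sqrt (ξ ^ (1-2*k)) / Real.sqrt (2*k-1) :=
            Real.sqrt_div (Real.rpow_nonneg hξ0.le _) _
        _ = ξ ^ ((1-2*k)/2) / Real.sqrt (2*k-1) := by rw [hsqval]
    have hsqnn : 0 ≤ Real.sqrt (∫ t in ξ..b, (Vstar k φ g t)^2) := Real.sqrt_nonneg _
    have hprod : ∫ t in ξ..b, |Vstar k φ g t| * |(t:ℝ) ^ (-k)| ≤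
        δ * (ξ ^ ((1-2*k)/2) / Real.sqrt (2*k-1)) := by
      refine hCS.trans ?_
      exact mul_le_mul hsq1 hsq2 (Real.sqrt_nonneg _) hδ.le
    have hFxi : |F ξ| ≤ |F b| + c ^ (-(2*k)) * (δ * (ξ ^ ((1-2*k)/2) / Real.sqrt (2*k-1))) := by
      have e : F ξ = F b - ∫ t in ξ..b, deriv F t := by rw [hftc]; ring
      rw [e, sub_eq_add_neg]
      refine (abs_add_le _ _).trans ?_
      rw [abs_neg]
      gcongr
      calc |∫ t in ξ..b, deriv F t| ≤ ∫ t in ξ..b, |deriv F t| := by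
            rw [← Real.norm_eq_abs]
            exact (intervalIntegral.norm_integral_le_integral_norm hcase).trans_eq
              (by simp [Real.norm_eq_abs])
        _ ≤ ∫ t in ξ..b, c ^ (-(2*k)) * (|Vstar k φ g t| * |(t:ℝ) ^ (-k)|) := hmono
        _ = c ^ (-(2*k)) * ∫ t in ξ..b, |Vstar k φ g t| * |(t:ℝ) ^ (-k)| := hconst
        _ ≤ c ^ (-(2*k)) * (δ * (ξ ^ ((1-2*k)/2) / Real.sqrt (2*k-1))) := by
            apply mul_le_mul_of_nonneg_left hprod (Real.rpow_nonneg hc.le _)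
    have hgFeq : ξ ^ k * F ξ = g ξ := by
      show ξ ^ k * (ξ ^ (-k) * g ξ) = g ξ
      rw [← mul_assoc, ← Real.rpow_add hξ0]
      simp
    have habs : |g ξ| = ξ ^ k * |F ξ| := by
      rw [← hgFeq, abs_mul, abs_of_pos hξk]
    have hFb : |F b| ≤ M * b ^ (-k) := by
      show |b ^ (-k) * g b| ≤ M * b ^ (-k)
      rw [abs_mul, abs_of_pos hbk]
      have : |g b| ≤ M := by rw [← Real.norm_eq_abs]; exact hM b ⟨le_rfl, hb1.le⟩
      nlinarith
    have hcoef : c ^ (-(2*k)) * δ / Real.sqrt (2*k-1) = ε := by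
      rw [hδdef, Real.rpow_neg hc.le]
      field_simp
    calc |g ξ| = ξ ^ k * |F ξ| := habs
      _ ≤ ξ ^ k * (|F b| + c ^ (-(2*k)) * (δ * (ξ ^ ((1-2*k)/2) / Real.sqrt (2*k-1)))) :=
          mul_le_mul_of_nonneg_left hFxi hξk.le
      _ = ξ ^ k * |F b| + (c ^ (-(2*k)) * δ / Real.sqrt (2*k-1)) * (ξ ^ k * ξ ^ ((1-2*k)/2)) := by
          ring
      _ = ξ ^ k * |F b| + ε * Real.sqrt ξ := by
          rw [← Real.rpow_add hξ0, hcoef]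
          have e1 : k + (1-2*k)/2 = 1/2 := by ring
          rw [e1, ← Real.sqrt_eq_rpow]
      _ ≤ (M * b ^ (-k)) * ξ ^ k + ε * Real.sqrt ξ := by
          have := mul_le_mul_of_nonneg_left hFb hξk.le
          linarith
      _ = ε * Real.sqrt ξ + (M * b ^ (-k)) * ξ ^ k := by ring
end
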